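/- arXiv:2509.19963 — 2 statements merged into one kernel-verified Lean document; each statement's English description precedes it below -/
import Mathlib

section
/- Let |ψ_j⟩ and |ψ_{j+1}⟩ = A|ψ_j⟩ be nonzero vectors, where A = 𝟙 ⊗ T⁻¹ acts on a tensor factor disjoint from the support of an observable O with ‖O‖ ≤ 1, and suppose the clustering estimate |⟨ψ_j|O ⊗ A†A|ψ_j⟩/⟨ψ_j|ψ_j⟩ − (⟨ψ_j|O|ψ_j⟩/⟨ψ_j|ψ_j⟩)·(⟨ψ_{j+1}|ψ_{j+1}⟩/⟨ψ_j|ψ_j⟩)| ≤ δ⁻² e^{−μℓ} holds, and that ⟨ψ_{j+1}|ψ_{j+1}⟩/⟨ψ_j|ψ_j⟩ ≥ δ². Then |⟨ψ_{j+1}|O|ψ_{j+1}⟩/⟨ψ_{j+1}|ψ_{j+1}⟩ − ⟨ψ_j|O|ψ_j⟩/⟨ψ_j|ψ_j⟩| ≤ δ⁻⁴ e^{−μℓ}. -/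
open scoped InnerProductSpace

/-!
Since `O` commutes with `A` and is self-adjoint, it also commutes with `A†`, so
`⟨Aψ|O|Aψ⟩ = ⟨ψ|O A†A|ψ⟩`. The quantity to bound is therefore the clustering defect
multiplied by `⟨ψ|ψ⟩/⟨Aψ|Aψ⟩ ≤ δ⁻²`.
-/

namespace LinearMap

variable {𝕜 E : Type*} [RCLike 𝕜] [NormedAddCommGroup E] [InnerProductSpace 𝕜 E]
  [FiniteDimensional 𝕜 E]

theorem IsSymmetric.adjoint_apply_comm {O A : E →ₗ[𝕜] E} (hO : O.IsSymmetric)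
    (hcomm : ∀ v, O (A v) = A (O v)) (v : E) :
    adjoint A (O v) = O (adjoint A v) :=
  ext_inner_left 𝕜 fun x => by
    rw [adjoint_inner_right, ← hO, hcomm, ← adjoint_inner_right, hO]

theorem IsSymmetric.inner_map_apply_map_eq {O A : E →ₗ[𝕜] E} (hO : O.IsSymmetric)
    (hcomm : ∀ v, O (A v) = A (O v)) (v : E) :
    ⟪A v, O (A v)⟫_𝕜 = ⟪v, O (adjoint A (A v))⟫_𝕜 := by
  rw [← hO.adjoint_apply_comm hcomm, adjoint_inner_right]

end LinearMap

theorem Complex.norm_div_sub_div_le_of_le_mul {x y : ℂ} {n m c ε : ℝ} (hn : 0 < n)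
    (hc : 0 < c) (hcm : c * n ≤ m) (hε : ‖x / n - y / n * (m / n)‖ ≤ ε) :
    ‖x / m - y / n‖ ≤ ε / c := by
  have hm : 0 < m := by nlinarith
  have hsplit : x / m - y / n = (x / n - y / n * (m / n)) * (n / m : ℝ) := by
    push_cast
    field_simp [hn.ne', hm.ne']
  have hnm : n / m ≤ c⁻¹ := by
    rw [div_le_iff₀ hm, inv_mul_eq_div, le_div_iff₀ hc]
    linarith
  rw [hsplit, norm_mul, Complex.norm_real, Real.norm_of_nonneg (by positivity), div_eq_mul_inv ε]
  exact mul_le_mul hε hnm (by positivity) ((norm_nonneg _).trans hε)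

theorem stmt7_general {H : Type*} [NormedAddCommGroup H] [InnerProductSpace ℂ H]
    [FiniteDimensional ℂ H]
    (O A : H →ₗ[ℂ] H) (ψj : H) (δ μ ℓ : ℝ)
    (hδ : δ ∈ Set.Ioc (0 : ℝ) 1)
    (hψj : ψj ≠ 0)
    (hO : LinearMap.IsSymmetric O)
    (hcomm : ∀ v : H, O (A v) = A (O v))
    (hratio : δ ^ 2 * ‖ψj‖ ^ 2 ≤ ‖A ψj‖ ^ 2)
    (hcluster :
      ‖((⟪ψj, O ((LinearMap.adjoint A) (A ψj))⟫_ℂ / (‖ψj‖ ^ 2 : ℂ)) -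
        (⟪ψj, O ψj⟫_ℂ / (‖ψj‖ ^ 2 : ℂ)) * ((‖A ψj‖ ^ 2 : ℂ) / (‖ψj‖ ^ 2 : ℂ)))‖ ≤
      δ⁻¹ ^ 2 * Real.exp (-μ * ℓ)) :
    ‖((⟪A ψj, O (A ψj)⟫_ℂ / (‖A ψj‖ ^ 2 : ℂ)) -
        (⟪ψj, O ψj⟫_ℂ / (‖ψj‖ ^ 2 : ℂ)))‖ ≤
      δ⁻¹ ^ 4 * Real.exp (-μ * ℓ) := by
  have hδ2 : 0 < δ ^ 2 := pow_pos hδ.1 2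
  have hbound : δ⁻¹ ^ 4 * Real.exp (-μ * ℓ) = δ⁻¹ ^ 2 * Real.exp (-μ * ℓ) / δ ^ 2 := by
    field_simp
  rw [hO.inner_map_apply_map_eq hcomm, hbound]
  have hψj_pos : 0 < ‖ψj‖ ^ 2 := by have := norm_pos_iff.mpr hψj; positivity
  simpa only [Complex.ofReal_pow] using
    Complex.norm_div_sub_div_le_of_le_mul hψj_pos hδ2 hratio (by simpa only [Complex.ofReal_pow])

/-- The single-step clustering estimate. With `ψ_{j+1} = A ψ_j` for
`A = 𝟙 ⊗ T⁻¹` (an operator commuting with the observable `O`, `‖O‖ ≤ 1`, `O` Hermitian),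
the clustering bound on `⟨ψ_j|O A†A|ψ_j⟩` and the norm-ratio bound
`⟨ψ_{j+1}|ψ_{j+1}⟩/⟨ψ_j|ψ_j⟩ ≥ δ²` imply that the normalized expectation values of `O`
on `ψ_j` and `ψ_{j+1}` differ by at most `δ⁻⁴ e^{-μℓ}`. -/
theorem stmt7 {H : Type*} [NormedAddCommGroup H] [InnerProductSpace ℂ H]
    [FiniteDimensional ℂ H]
    (O A : H →ₗ[ℂ] H) (ψj : H) (δ μ ℓ : ℝ)
    (hδ : δ ∈ Set.Ioc (0 : ℝ) 1) (hμ : 0 < μ) (hℓ : 0 < ℓ)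
    (hψj : ψj ≠ 0) (hψj1 : A ψj ≠ 0)
    (hO : LinearMap.IsSymmetric O) (hOnorm : ∀ v : H, ‖O v‖ ≤ ‖v‖)
    (hcomm : ∀ v : H, O (A v) = A (O v))
    (hratio : δ ^ 2 * ‖ψj‖ ^ 2 ≤ ‖A ψj‖ ^ 2)
    (hcluster :
      ‖((⟪ψj, O ((LinearMap.adjoint A) (A ψj))⟫_ℂ / (‖ψj‖ ^ 2 : ℂ)) -
        (⟪ψj, O ψj⟫_ℂ / (‖ψj‖ ^ 2 : ℂ)) * ((‖A ψj‖ ^ 2 : ℂ) / (‖ψj‖ ^ 2 : ℂ)))‖ ≤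
      δ⁻¹ ^ 2 * Real.exp (-μ * ℓ)) :
    ‖((⟪A ψj, O (A ψj)⟫_ℂ / (‖A ψj‖ ^ 2 : ℂ)) -
        (⟪ψj, O ψj⟫_ℂ / (‖ψj‖ ^ 2 : ℂ)))‖ ≤
      δ⁻¹ ^ 4 * Real.exp (-μ * ℓ) :=
  stmt7_general O A ψj δ μ ℓ hδ hψj hO hcomm hratio hcluster
end

section
/- Let {(a_i, b_i, c_i, d_i)}_{i=1}^t be a tile set with colors in {1,…,D} and define the tensor T = Σ_{i=1}^t |i⟩⟨a_i|⟨b_i|⟨c_i|⟨d_i|. Then the norm ⟨Ψ|Ψ⟩ of the uniform PEPS on an n₁×n₂ periodic grid built from T (with unnormalized maximally entangled bond states Σ_j |jj⟩) equals the number Z(n₁,n₂) of valid tilings of the n₁×n₂ torus, where a valid tiling assigns a tile to each vertex such that adjacent tiles have matching colors on their shared edge. -/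
open Finset

/-- The norm of the uniform PEPS built from the Wang-tile tensor
`T = ∑ i |i⟩⟨aᵢ|⟨bᵢ|⟨cᵢ|⟨dᵢ|` on the `n₁ × n₂` periodic grid (with unnormalized bond
states `∑_j |jj⟩`, encoded by a single shared color per edge) equals the number of
valid Wang tilings of the `n₁ × n₂` torus. Here the amplitude of a physical
configuration `p` is obtained by contracting the bond indices: `Ψ p` sums over colorings
`h` of the horizontal edges and `g` of the vertical edges the product over vertices of
the tensor entries. -/
theorem stmt14 (t D n₁ n₂ : ℕ) [NeZero n₁] [NeZero n₂]
    (a b c d : Fin t → Fin D)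
    (Ψ : ((ZMod n₁ × ZMod n₂) → Fin t) → ℂ)
    (hΨ : ∀ p, Ψ p = ∑ h : (ZMod n₁ × ZMod n₂) → Fin D, ∑ g : (ZMod n₁ × ZMod n₂) → Fin D,
      ∏ v : ZMod n₁ × ZMod n₂,
        (if a (p v) = h (v.1 - 1, v.2) ∧ b (p v) = h v ∧
            c (p v) = g (v.1, v.2 - 1) ∧ d (p v) = g v then (1 : ℂ) else 0)) :
    (∑ p : (ZMod n₁ × ZMod n₂) → Fin t, star (Ψ p) * Ψ p) =
      (Fintype.card {f : (ZMod n₁ × ZMod n₂) → Fin t //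
        ∀ v : ZMod n₁ × ZMod n₂,
          b (f v) = a (f (v.1 + 1, v.2)) ∧ d (f v) = c (f (v.1, v.2 + 1))} : ℂ) := by
  set V : ((ZMod n₁ × ZMod n₂) → Fin t) → Prop := fun p =>
    ∀ v : ZMod n₁ × ZMod n₂,
      b (p v) = a (p (v.1 + 1, v.2)) ∧ d (p v) = c (p (v.1, v.2 + 1)) with hV
  have key : ∀ p, Ψ p = if V p then 1 else 0 := by
    intro p
    rw [hΨ p]
    have h1 : ∀ (h g : (ZMod n₁ × ZMod n₂) → Fin D),
        (∏ v : ZMod n₁ × ZMod n₂,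
          (if a (p v) = h (v.1 - 1, v.2) ∧ b (p v) = h v ∧
              c (p v) = g (v.1, v.2 - 1) ∧ d (p v) = g v then (1 : ℂ) else 0)) =
        if h = (fun v => b (p v)) ∧ g = (fun v => d (p v)) ∧ V p then 1 else 0 := by
      intro h g
      rw [Finset.prod_boole]
      congr 1
      simp only [eq_iff_iff, mem_univ, forall_true_left]
      constructor
      · intro H
        refine ⟨funext fun v => ((H v).2.1).symm, funext fun v => ((H v).2.2.2).symm, ?_⟩
        intro v
        constructor
        · have := (H (v.1 + 1, v.2)).1
          simp only [add_sub_cancel_right, Prod.mk.eta] at this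
          rw [(H v).2.1, this]
        · have := (H (v.1, v.2 + 1)).2.2.1
          simp only [add_sub_cancel_right, Prod.mk.eta] at this
          rw [(H v).2.2.2, this]
      · rintro ⟨rfl, rfl, hv⟩ v
        refine ⟨?_, rfl, ?_, rfl⟩
        · have := (hv ((v.1 - 1, v.2))).1
          simpa [sub_add_cancel] using this.symm
        · have := (hv ((v.1, v.2 - 1))).2
          simpa [sub_add_cancel] using this.symm
    simp only [h1]
    by_cases hvp : V p
    · simp [hvp, ite_and, Finset.sum_ite_eq']
    · simp [hvp]
  have key2 : ∀ p, star (Ψ p) * Ψ p = if V p then (1 : ℂ) else 0 := by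
    intro p
    rw [key p]
    split_ifs <;> simp
  classical
  simp only [key2]
  rw [Finset.sum_boole, Fintype.card_subtype]
end
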